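/- For every natural number n, ∑_{k=0}^{n} (-1/2)^k · binom(2k,k) · binom(n,k) · (2k+1)(k^2+3k+3)(n-k) / ((k+1)^2 (k+2)(k+3)) equals 1/2 - (n+1)·binom(n, n/2)/(2^n (n+2)) if n is even, and equals 1/2 if n is odd. -/

import Mathlib

/-!
Zeilberger's algorithm gives a certificate `G(n, k)` with
`G(n, k + 1) - G(n, k) = (n + 4) F(n + 2, k) - (n + 3) F(n, k)` for the summand `F`, so telescoping
over `k` shows that the sum `S(n)` satisfies `(n + 4) S(n + 2) - (n + 3) S(n) = 1/2`. The central
term `T(n) = C(n, n/2) (n + 1) / (2^n (n + 2))` of even `n` (and `T(n) = 0` for odd `n`) satisfies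
`(n + 4) T(n + 2) = (n + 3) T(n)`, hence `S + T` is determined by `S(0) + T(0) = S(1) + T(1) = 1/2`.
-/

open Finset

namespace Nat

variable {R : Type*}

theorem cast_choose_succ_right_mul [Ring R] (m k : ℕ) :
    (m.choose (k + 1) : R) * (k + 1) = m.choose k * (m - k) := by
  rcases le_or_gt k m with hk | hk
  · simpa [Nat.cast_sub hk] using congrArg (Nat.cast (R := R)) (choose_succ_right_eq m k)
  · simp [choose_eq_zero_of_lt hk, choose_eq_zero_of_lt (lt_succ_of_lt hk)]

theorem cast_choose_mul_succ [Ring R] (m k : ℕ) :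
    (m.choose k : R) * (m + 1) = (m + 1).choose k * (m + 1 - k) := by
  rcases le_or_gt k (m + 1) with hk | hk
  · simpa [Nat.cast_sub hk] using congrArg (Nat.cast (R := R)) (choose_mul_succ_eq m k)
  · simp [choose_eq_zero_of_lt hk, choose_eq_zero_of_lt (lt_of_succ_lt hk)]

theorem cast_centralBinom_succ [Field R] [CharZero R] (k : ℕ) :
    ((k + 1).centralBinom : R) = 2 * (2 * k + 1) * k.centralBinom / (k + 1) := by
  rw [eq_div_iff (Nat.cast_add_one_ne_zero k), mul_comm]
  exact_mod_cast succ_mul_centralBinom_succ k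

end Nat

namespace CentralBinomSum

noncomputable def summand (n k : ℕ) : ℝ :=
  (-(1/2) : ℝ) ^ k * (k.centralBinom : ℝ) * (n.choose k : ℝ)
    * ((2 * (k : ℝ) + 1) * ((k : ℝ) ^ 2 + 3 * k + 3) * ((n : ℝ) - k))
    / (((k : ℝ) + 1) ^ 2 * ((k : ℝ) + 2) * ((k : ℝ) + 3))

-- Found by Zeilberger's algorithm.
noncomputable def certificate (n k : ℕ) : ℝ :=
  (-(1/2) : ℝ) ^ k * (k.centralBinom : ℝ) * ((n + 2).choose k : ℝ)
    * ((2 * (n : ℝ) + 6) * (k : ℝ) ^ 6 + (-2 * (n : ℝ) ^ 2 + n + 21) * (k : ℝ) ^ 5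
      + (-11 * (n : ℝ) ^ 2 - 34 * n - 7) * (k : ℝ) ^ 4
      + (-21 * (n : ℝ) ^ 2 - 79 * n - 70) * (k : ℝ) ^ 3
      + (-22 * (n : ℝ) ^ 2 - 79 * n - 77) * (k : ℝ) ^ 2
      + (-13 * (n : ℝ) ^ 2 - 42 * n - 35) * k
      - 3 * ((n : ℝ) + 1) * ((n : ℝ) + 2))
    / (((n : ℝ) + 1) * ((n : ℝ) + 2) * ((k : ℝ) + 1) ^ 2 * ((k : ℝ) + 2) * ((k : ℝ) + 3))

theorem summand_eq_zero_of_lt {n k : ℕ} (h : n < k) : summand n k = 0 := by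
  simp [summand, Nat.choose_eq_zero_of_lt h]

theorem certificate_eq_zero_of_lt {n k : ℕ} (h : n + 2 < k) : certificate n k = 0 := by
  simp [certificate, Nat.choose_eq_zero_of_lt h]

theorem certificate_zero (n : ℕ) : certificate n 0 = -(1/2) := by
  simp only [certificate, Nat.centralBinom_zero, Nat.choose_zero_right]
  field_simp
  ring

theorem certificate_succ_sub (n k : ℕ) :
    certificate n (k + 1) - certificate n k
      = ((n : ℝ) + 4) * summand (n + 2) k - ((n : ℝ) + 3) * summand n k := by
  have hb : ((n + 2).choose (k + 1) : ℝ) = (n + 2).choose k * (n + 2 - k) / (k + 1) := by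
    rw [eq_div_iff (by positivity)]
    exact_mod_cast Nat.cast_choose_succ_right_mul (R := ℝ) (n + 2) k
  have ha : (n.choose k : ℝ)
      = (n + 2).choose k * (n + 2 - k) * (n + 1 - k) / ((n + 1) * (n + 2)) := by
    rw [eq_div_iff (by positivity)]
    have h₁ := Nat.cast_choose_mul_succ (R := ℝ) n k
    have h₂ := Nat.cast_choose_mul_succ (R := ℝ) (n + 1) k
    push_cast at h₁ h₂
    linear_combination ((n : ℝ) + 2) * h₁ + ((n : ℝ) + 1 - k) * h₂
  simp only [certificate, summand]
  rw [Nat.cast_centralBinom_succ, hb, ha]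
  push_cast
  field_simp
  ring

theorem sum_summand_recurrence (n : ℕ) :
    ((n : ℝ) + 4) * ∑ k ∈ range (n + 3), summand (n + 2) k
      - ((n : ℝ) + 3) * ∑ k ∈ range (n + 1), summand n k = 1 / 2 := by
  have hext : ∑ k ∈ range (n + 1), summand n k = ∑ k ∈ range (n + 3), summand n k :=
    sum_subset (range_subset_range.2 (by omega)) fun k _ hk =>
      summand_eq_zero_of_lt (by simpa using hk)
  rw [hext, mul_sum, mul_sum, ← sum_sub_distrib]
  simp_rw [← certificate_succ_sub]
  rw [sum_range_sub, certificate_eq_zero_of_lt (by omega), certificate_zero]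
  norm_num

noncomputable def centralTerm (n : ℕ) : ℝ :=
  if Even n then (n.choose (n / 2) : ℝ) * ((n : ℝ) + 1) / (2 ^ n * ((n : ℝ) + 2)) else 0

theorem centralTerm_two_mul (m : ℕ) :
    centralTerm (2 * m) = m.centralBinom * (2 * (m : ℝ) + 1) / (4 ^ m * (2 * m + 2)) := by
  norm_num [centralTerm, Nat.centralBinom_eq_two_mul_choose, pow_mul]

theorem centralTerm_recurrence (n : ℕ) :
    ((n : ℝ) + 4) * centralTerm (n + 2) = ((n : ℝ) + 3) * centralTerm n := by
  obtain ⟨m, rfl | rfl⟩ := Nat.even_or_odd' n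
  · rw [show 2 * m + 2 = 2 * (m + 1) by ring, centralTerm_two_mul, centralTerm_two_mul,
      Nat.cast_centralBinom_succ]
    push_cast
    field_simp
    ring
  · simp [centralTerm, parity_simps]

theorem sum_summand_add_centralTerm (n : ℕ) :
    ∑ k ∈ range (n + 1), summand n k + centralTerm n = 1 / 2 := by
  induction n using Nat.twoStepInduction with
  | zero => norm_num [summand, centralTerm]
  | one => norm_num [sum_range_succ, summand, centralTerm]
  | more n ih _ =>
    refine mul_left_cancel₀ (by positivity : (n : ℝ) + 4 ≠ 0) ?_
    linear_combination sum_summand_recurrence n + centralTerm_recurrence n + ((n : ℝ) + 3) * ih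

end CentralBinomSum

open CentralBinomSum in
/-- An identity derived in Section 5 of the paper by applying the modified Abel
lemma on summation by parts. -/
theorem stmt_14 (n : ℕ) :
    ∑ k ∈ Finset.range (n + 1),
      (-(1/2) : ℝ) ^ k * ((2 * k).choose k : ℝ) * (n.choose k : ℝ)
        * ((2 * (k : ℝ) + 1) * ((k : ℝ) ^ 2 + 3 * k + 3) * ((n : ℝ) - k))
        / (((k : ℝ) + 1) ^ 2 * ((k : ℝ) + 2) * ((k : ℝ) + 3))
    = if Even n then
        1 / 2 - (n.choose (n / 2) : ℝ) * ((n : ℝ) + 1) / (2 ^ n * ((n : ℝ) + 2))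
      else 1 / 2 := by
  have h := sum_summand_add_centralTerm n
  simp only [summand, centralTerm, Nat.centralBinom_eq_two_mul_choose] at h
  split_ifs at h ⊢ <;> linarith
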